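/- Let H₁ be a real Hilbert space and E = ℝ^{n_u}. Let A, Ã : H₁ → H₁ and B, B̃ : E → H₁ be bounded, R : E → E self-adjoint positive definite, Q : H₁ → H₁ bounded self-adjoint positive semidefinite, N := B R⁻¹ B*. Let P be a bounded self-adjoint positive semidefinite solution of the Riccati equation P = A* P (I + N P)⁻¹ A + Q, let K := −(R + B* P B)⁻¹ B* P A, L := A + B K, and suppose ρ(L) ≤ ρ < 1 with τ(L, ρ) := sup_{k≥0} ‖L^k‖ ρ^{-k} finite. Define T X := X − L* X L, R̂ X := L* X (I + N(P+X))⁻¹ N X L, F(M, A, B) := M − A* M (I + N M)⁻¹ A − Q (and F(M, Ã, B̃) analogously with Ñ := B̃ R⁻¹ B̃*), and Φ X := T⁻¹[F(P+X, A, B) − F(P+X, Ã, B̃) − R̂ X]. If X is bounded self-adjoint with ‖X‖ ≤ ν ≤ 1/2 and P + X positive semidefinite, ‖A − Ã‖ ≤ ε, ‖B − B̃‖ ≤ ε, and ε ≤ ‖B‖, then ‖Φ X‖ ≤ (τ(L, ρ)²/(1 − ρ²)) [ ‖L‖² ‖N‖ ν² + 3 ε (‖P‖+1)² (‖A‖+1)²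 (‖R⁻¹‖+1) (‖B‖+1) ]. -/

import Mathlib

open ContinuousLinearMap
open scoped RealInnerProductSpace

/-- The discrete algebraic Riccati map `M ↦ M - A* M (I + N M)⁻¹ A - Q`. -/
noncomputable def riccatiMap {H₁ : Type*} [NormedAddCommGroup H₁] [InnerProductSpace ℝ H₁]
    [CompleteSpace H₁] (A N Q M : H₁ →L[ℝ] H₁) : H₁ →L[ℝ] H₁ :=
  M - ContinuousLinearMap.adjoint A ∘L M ∘L
    Ring.inverse ((1 : H₁ →L[ℝ] H₁) + N ∘L M) ∘L A - Q

/-- The quadratic remainder `R̂ X = L* X (I + N(P+X))⁻¹ N X L`. -/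
noncomputable def quadRem {H₁ : Type*} [NormedAddCommGroup H₁] [InnerProductSpace ℝ H₁]
    [CompleteSpace H₁] (L N P X : H₁ →L[ℝ] H₁) : H₁ →L[ℝ] H₁ :=
  ContinuousLinearMap.adjoint L ∘L X ∘L
    Ring.inverse ((1 : H₁ →L[ℝ] H₁) + N ∘L (P + X)) ∘L N ∘L X ∘L L

/-- The fixed-point map `Φ X = T⁻¹[F(P+X, A, B) - F(P+X, Ã, B̃) - R̂ X]`. -/
noncomputable def PhiMap {H₁ : Type*} [NormedAddCommGroup H₁] [InnerProductSpace ℝ H₁]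
    [CompleteSpace H₁] (T : (H₁ →L[ℝ] H₁) →L[ℝ] (H₁ →L[ℝ] H₁))
    (A A' N N' Q P L X : H₁ →L[ℝ] H₁) : H₁ →L[ℝ] H₁ :=
  Ring.inverse T
    (riccatiMap A N Q (P + X) - riccatiMap A' N' Q (P + X) - quadRem L N P X)

/-!
`T⁻¹` is the Stein series `D ↦ ∑ₖ L*ᵏ D Lᵏ`, of norm at most `τ² / (1 - ρ²) ‖D‖` since
`‖Lᵏ‖ ≤ τ ρᵏ`; so it suffices to bound the bracket. The key estimate is
`‖M (I + N M)⁻¹‖ ≤ ‖M‖` for `M ≥ 0` and `N` with nonnegative quadratic form: for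
`x = (I + N M) z` one has `⟪M z, z⟫ ≤ ⟪M z, x⟫`, while `‖M z‖² ≤ ‖M‖ ⟪M z, z⟫`. It bounds the
quadratic remainder by `‖L‖² ‖N‖ ν²`, and, through the resolvent identity
`M (I + Ñ M)⁻¹ - M (I + N M)⁻¹ = M (I + Ñ M)⁻¹ (N - Ñ) M (I + N M)⁻¹`, the difference of the two
Riccati maps by `‖A - Ã‖` and `‖N - Ñ‖ ≤ (2 ‖B‖ + ε) ε ‖R⁻¹‖`.
-/

section Resolvent

variable {𝔸 : Type*} [Ring 𝔸]

theorem mul_ringInverse_one_add_mul_sub {M N N' : 𝔸} (hu : IsUnit (1 + N * M))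
    (hu' : IsUnit (1 + N' * M)) :
    M * Ring.inverse (1 + N' * M) - M * Ring.inverse (1 + N * M) =
      M * Ring.inverse (1 + N' * M) * (N - N') * (M * Ring.inverse (1 + N * M)) := by
  set J := Ring.inverse (1 + N * M)
  set J' := Ring.inverse (1 + N' * M)
  calc M * J' - M * J = M * J' * ((1 + N * M) * J) - M * (J' * (1 + N' * M)) * J := by
        rw [Ring.mul_inverse_cancel _ hu, Ring.inverse_mul_cancel _ hu', mul_one, mul_one]
    _ = M * J' * (N - N') * (M * J) := by noncomm_ring

end Resolvent

section Stein

variable {𝔸 : Type*} [NormedRing 𝔸] [StarRing 𝔸] [NormedStarGroup 𝔸]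
  {L : 𝔸} {τ ρ : ℝ}

noncomputable def steinSeries (L D : 𝔸) : 𝔸 :=
  ∑' k : ℕ, star (L ^ k) * D * L ^ k

theorem norm_star_pow_mul_mul_pow_le (hL : ∀ k : ℕ, ‖L ^ k‖ ≤ τ * ρ ^ k) (D : 𝔸) (k : ℕ) :
    ‖star (L ^ k) * D * L ^ k‖ ≤ τ ^ 2 * ‖D‖ * (ρ ^ 2) ^ k := by
  calc ‖star (L ^ k) * D * L ^ k‖ ≤ ‖L ^ k‖ * ‖D‖ * ‖L ^ k‖ := by
        simpa only [norm_star] using norm_mul₃_le (a := star (L ^ k)) (b := D) (c := L ^ k)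
    _ ≤ (τ * ρ ^ k) * ‖D‖ * (τ * ρ ^ k) := by
        have hτρ : 0 ≤ τ * ρ ^ k := (norm_nonneg _).trans (hL k)
        gcongr <;> exact hL k
    _ = τ ^ 2 * ‖D‖ * (ρ ^ 2) ^ k := by ring

theorem summable_norm_star_pow_mul_mul_pow (hL : ∀ k : ℕ, ‖L ^ k‖ ≤ τ * ρ ^ k)
    (hρ : ρ ^ 2 < 1) (D : 𝔸) : Summable fun k : ℕ => ‖star (L ^ k) * D * L ^ k‖ :=
  .of_nonneg_of_le (fun _ => norm_nonneg _) (norm_star_pow_mul_mul_pow_le hL D)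
    ((summable_geometric_of_lt_one (sq_nonneg ρ) hρ).mul_left _)

theorem norm_steinSeries_le (hL : ∀ k : ℕ, ‖L ^ k‖ ≤ τ * ρ ^ k) (hρ : ρ ^ 2 < 1) (D : 𝔸) :
    ‖steinSeries L D‖ ≤ τ ^ 2 / (1 - ρ ^ 2) * ‖D‖ := by
  have hgeom := summable_geometric_of_lt_one (sq_nonneg ρ) hρ
  calc ‖steinSeries L D‖ ≤ ∑' k : ℕ, ‖star (L ^ k) * D * L ^ k‖ :=
        norm_tsum_le_tsum_norm (summable_norm_star_pow_mul_mul_pow hL hρ D)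
    _ ≤ ∑' k : ℕ, τ ^ 2 * ‖D‖ * (ρ ^ 2) ^ k :=
        (summable_norm_star_pow_mul_mul_pow hL hρ D).tsum_le_tsum
          (norm_star_pow_mul_mul_pow_le hL D) (hgeom.mul_left _)
    _ = τ ^ 2 / (1 - ρ ^ 2) * ‖D‖ := by
        rw [tsum_mul_left, tsum_geometric_of_lt_one (sq_nonneg ρ) hρ]
        ring

theorem steinSeries_sub_star_mul_mul [CompleteSpace 𝔸] (hL : ∀ k : ℕ, ‖L ^ k‖ ≤ τ * ρ ^ k)
    (hρ : ρ ^ 2 < 1) (D : 𝔸) : steinSeries L D - star L * steinSeries L D * L = D := by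
  have hsum := (summable_norm_star_pow_mul_mul_pow hL hρ D).of_norm
  have hshift : star L * steinSeries L D * L = ∑' k : ℕ, star (L ^ (k + 1)) * D * L ^ (k + 1) := by
    rw [steinSeries, ← hsum.tsum_mul_left, ← (hsum.mul_left _).tsum_mul_right]
    congr 1
    funext k
    simp only [pow_succ, star_mul]
    noncomm_ring
  rw [hshift, steinSeries, hsum.tsum_eq_zero_add]
  simp

theorem norm_ringInverse_apply_le_of_stein [CompleteSpace 𝔸] {𝕜 : Type*} [NormedField 𝕜]
    [NormedSpace 𝕜 𝔸] {T : 𝔸 →L[𝕜] 𝔸} (hT : ∀ Y, T Y = Y - star L * Y * L)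
    (hL : ∀ k : ℕ, ‖L ^ k‖ ≤ τ * ρ ^ k) (hρ : ρ ^ 2 < 1) (D : 𝔸) :
    ‖Ring.inverse T D‖ ≤ τ ^ 2 / (1 - ρ ^ 2) * ‖D‖ := by
  by_cases hTu : IsUnit T
  · have hTS : T (steinSeries L D) = D := by
      rw [hT]
      exact steinSeries_sub_star_mul_mul hL hρ D
    have hinv : Ring.inverse T D = steinSeries L D := by
      conv_lhs => rw [← hTS]
      exact congr($(Ring.inverse_mul_cancel T hTu) (steinSeries L D))
    exact hinv ▸ norm_steinSeries_le hL hρ D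
  · rw [Ring.inverse_non_unit T hTu, zero_apply, norm_zero]
    positivity

end Stein

section Positive

variable {H : Type*} [NormedAddCommGroup H] [InnerProductSpace ℝ H]

namespace ContinuousLinearMap.IsPositive

theorem norm_apply_sq_le {M : H →L[ℝ] H} (hM : M.IsPositive) (z : H) :
    ‖M z‖ ^ 2 ≤ ‖M‖ * ⟪M z, z⟫ := by
  -- the quadratic `t ↦ ⟪M (z + t M z), z + t M z⟫` is nonnegative, so its discriminant is `≤ 0`
  have hquad : ∀ t : ℝ, 0 ≤ ⟪M (M z), M z⟫ * (t * t) + 2 * ‖M z‖ ^ 2 * t + ⟪M z, z⟫ := by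
    intro t
    have hMMz : ⟪M (M z), z⟫ = ‖M z‖ ^ 2 := by
      rw [hM.inner_left_eq_inner_right, real_inner_self_eq_norm_sq]
    calc 0 ≤ ⟪M (z + t • M z), z + t • M z⟫ := hM.inner_nonneg_left _
      _ = _ := by
        simp only [map_add, map_smul, inner_add_left, inner_add_right, real_inner_smul_left,
          real_inner_smul_right, hMMz, real_inner_self_eq_norm_sq]
        ring
  have hdisc := discrim_le_zero hquad
  have hMMz_le : ⟪M (M z), M z⟫ ≤ ‖M‖ * ‖M z‖ ^ 2 :=
    calc ⟪M (M z), M z⟫ ≤ ‖M (M z)‖ * ‖M z‖ := real_inner_le_norm _ _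
      _ ≤ ‖M‖ * ‖M z‖ * ‖M z‖ := by gcongr; exact M.le_opNorm _
      _ = ‖M‖ * ‖M z‖ ^ 2 := by ring
  rw [discrim] at hdisc
  rcases (norm_nonneg (M z)).eq_or_lt with h | h
  · rw [← h]
    simpa using mul_nonneg (norm_nonneg M) (hM.inner_nonneg_left z)
  · nlinarith [mul_le_mul_of_nonneg_right hMMz_le (hM.inner_nonneg_left z), pow_pos h 2]

theorem norm_mul_ringInverse_one_add_mul_le {M N : H →L[ℝ] H} (hM : M.IsPositive)
    (hN : ∀ x, 0 ≤ ⟪N x, x⟫) : ‖M * Ring.inverse (1 + N * M)‖ ≤ ‖M‖ := by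
  by_cases hu : IsUnit (1 + N * M)
  swap
  · simp [Ring.inverse_non_unit _ hu]
  refine opNorm_le_bound _ (norm_nonneg M) fun x => ?_
  set z := Ring.inverse (1 + N * M) x
  have hx : x = z + N (M z) := congr($(Ring.mul_inverse_cancel _ hu) x).symm
  have hMz : ⟪M z, z⟫ ≤ ‖M z‖ * ‖x‖ :=
    calc ⟪M z, z⟫ ≤ ⟪M z, x⟫ := by
          rw [hx, inner_add_right, real_inner_comm (N (M z))]
          linarith [hN (M z)]
      _ ≤ ‖M z‖ * ‖x‖ := real_inner_le_norm _ _
  have hsq := hM.norm_apply_sq_le z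
  change ‖M z‖ ≤ ‖M‖ * ‖x‖
  nlinarith [norm_nonneg (M z), mul_nonneg (norm_nonneg M) (norm_nonneg x),
    mul_le_mul_of_nonneg_left hMz (norm_nonneg M)]

variable [CompleteSpace H]

theorem norm_ringInverse_one_add_mul_mul_le {M N : H →L[ℝ] H} (hM : M.IsPositive)
    (hN : N.IsPositive) : ‖Ring.inverse (1 + N * M) * N‖ ≤ ‖N‖ := by
  rw [← norm_star, star_mul, ← Ring.inverse_star, star_add, star_one, star_mul,
    hM.isSelfAdjoint.star_eq, hN.isSelfAdjoint.star_eq]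
  exact hN.norm_mul_ringInverse_one_add_mul_le hM.inner_nonneg_left

protected theorem ringInverse {R : H →L[ℝ] H} (hR : R.IsPositive) :
    (Ring.inverse R).IsPositive := by
  by_cases hu : IsUnit R
  swap
  · simp [Ring.inverse_non_unit _ hu]
  refine (isPositive_iff' _).2 ⟨hR.isSelfAdjoint.ringInverse, fun v => ?_⟩
  have hv : R (Ring.inverse R v) = v := congr($(Ring.mul_inverse_cancel _ hu) v)
  calc 0 ≤ ⟪R (Ring.inverse R v), Ring.inverse R v⟫ := hR.inner_nonneg_left _
    _ = ⟪Ring.inverse R v, v⟫ := by rw [hv, real_inner_comm]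

end ContinuousLinearMap.IsPositive

end Positive

section Riccati

variable {H : Type*} [NormedAddCommGroup H] [InnerProductSpace ℝ H] [CompleteSpace H]

theorem norm_comp_comp_adjoint_sub_le {E : Type*} [NormedAddCommGroup E] [InnerProductSpace ℝ E]
    [CompleteSpace E] {B B' : E →L[ℝ] H} {ε : ℝ} (hB : ‖B - B'‖ ≤ ε) (S : E →L[ℝ] E) :
    ‖B ∘L S ∘L adjoint B - B' ∘L S ∘L adjoint B'‖ ≤ (2 * ‖B‖ + ε) * ε * ‖S‖ := by
  have hε : 0 ≤ ε := (norm_nonneg _).trans hB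
  have hB' : ‖B'‖ ≤ ‖B‖ + ε := (norm_le_norm_add_norm_sub B B').trans (by gcongr)
  have hsplit : B ∘L S ∘L adjoint B - B' ∘L S ∘L adjoint B' =
      (B - B') ∘L S ∘L adjoint B + B' ∘L S ∘L adjoint (B - B') := by
    simp only [map_sub, sub_comp, comp_sub]
    abel
  rw [hsplit]
  have hcomp : ∀ C D : E →L[ℝ] H, ‖C ∘L S ∘L adjoint D‖ ≤ ‖C‖ * ‖S‖ * ‖D‖ :=
    fun C D => by
      calc ‖C ∘L S ∘L adjoint D‖ ≤ ‖C‖ * (‖S‖ * ‖adjoint D‖) :=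
            (opNorm_comp_le _ _).trans (by gcongr; exact opNorm_comp_le _ _)
        _ = ‖C‖ * ‖S‖ * ‖D‖ := by rw [LinearIsometryEquiv.norm_map, mul_assoc]
  calc _ ≤ ‖B - B'‖ * ‖S‖ * ‖B‖ + ‖B'‖ * ‖S‖ * ‖B - B'‖ :=
        (norm_add_le _ _).trans (add_le_add (hcomp _ _) (hcomp _ _))
    _ ≤ ε * ‖S‖ * ‖B‖ + (‖B‖ + ε) * ‖S‖ * ε := by gcongr
    _ = (2 * ‖B‖ + ε) * ε * ‖S‖ := by ring

theorem norm_riccatiMap_sub_riccatiMap_le {A A' N N' Q M : H →L[ℝ] H} {ε : ℝ}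
    (hM : M.IsPositive) (hN : ∀ x, 0 ≤ ⟪N x, x⟫) (hN' : ∀ x, 0 ≤ ⟪N' x, x⟫)
    (hu : IsUnit (1 + N ∘L M)) (hu' : IsUnit (1 + N' ∘L M)) (hA : ‖A - A'‖ ≤ ε) :
    ‖riccatiMap A N Q M - riccatiMap A' N' Q M‖ ≤
      ‖A‖ ^ 2 * ‖M‖ ^ 2 * ‖N - N'‖ + (2 * ‖A‖ + ε) * ε * ‖M‖ := by
  set W := M * Ring.inverse (1 + N * M)
  set W' := M * Ring.inverse (1 + N' * M)
  have hW : ‖W‖ ≤ ‖M‖ := hM.norm_mul_ringInverse_one_add_mul_le hN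
  have hW' : ‖W'‖ ≤ ‖M‖ := hM.norm_mul_ringInverse_one_add_mul_le hN'
  have hres : W' - W = W' * (N - N') * W := mul_ringInverse_one_add_mul_sub hu hu'
  set Δ := A - A'
  have hdiff : riccatiMap A N Q M - riccatiMap A' N' Q M =
      star A * (W' - W) * A - star Δ * W' * A - star A * W' * Δ + star Δ * W' * Δ := by
    simp only [riccatiMap, ← mul_def, ← star_eq_adjoint, Δ, star_sub]
    noncomm_ring
  have hε : 0 ≤ ε := (norm_nonneg _).trans hA
  have hWW : ‖W' - W‖ ≤ ‖M‖ ^ 2 * ‖N - N'‖ :=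
    calc ‖W' - W‖ ≤ ‖W'‖ * ‖N - N'‖ * ‖W‖ := hres ▸ norm_mul₃_le
      _ ≤ ‖M‖ * ‖N - N'‖ * ‖M‖ := by gcongr
      _ = ‖M‖ ^ 2 * ‖N - N'‖ := by ring
  have hstar : ∀ X Y Z : H →L[ℝ] H, ‖star X * Y * Z‖ ≤ ‖X‖ * ‖Y‖ * ‖Z‖ := fun X Y Z => by
    rw [← norm_star X]; exact norm_mul₃_le
  rw [hdiff]
  calc _ ≤ ‖star A * (W' - W) * A‖ + ‖star Δ * W' * A‖ + ‖star A * W' * Δ‖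
          + ‖star Δ * W' * Δ‖ :=
        (norm_add_le _ _).trans <| by
          gcongr
          exact (norm_sub_le _ _).trans (by gcongr; apply norm_sub_le)
    _ ≤ ‖A‖ * ‖W' - W‖ * ‖A‖ + ‖Δ‖ * ‖W'‖ * ‖A‖ + ‖A‖ * ‖W'‖ * ‖Δ‖ + ‖Δ‖ * ‖W'‖ * ‖Δ‖ :=
        add_le_add (add_le_add (add_le_add (hstar _ _ _) (hstar _ _ _)) (hstar _ _ _))
          (hstar _ _ _)
    _ ≤ ‖A‖ * (‖M‖ ^ 2 * ‖N - N'‖) * ‖A‖ + ε * ‖M‖ * ‖A‖ + ‖A‖ * ‖M‖ * ε + ε * ‖M‖ * ε := by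
        gcongr
    _ = ‖A‖ ^ 2 * ‖M‖ ^ 2 * ‖N - N'‖ + (2 * ‖A‖ + ε) * ε * ‖M‖ := by ring

theorem norm_quadRem_le {L N P X : H →L[ℝ] H} (hPX : (P + X).IsPositive) (hN : N.IsPositive) :
    ‖quadRem L N P X‖ ≤ ‖L‖ ^ 2 * ‖N‖ * ‖X‖ ^ 2 := by
  have hq : quadRem L N P X =
      star L * X * (Ring.inverse (1 + N * (P + X)) * N) * (X * L) := by
    simp only [quadRem, ← mul_def, ← star_eq_adjoint]
    noncomm_ring
  rw [hq]
  calc _ ≤ ‖star L * X‖ * ‖Ring.inverse (1 + N * (P + X)) * N‖ * ‖X * L‖ := norm_mul₃_le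
    _ ≤ ‖L‖ * ‖X‖ * ‖N‖ * (‖X‖ * ‖L‖) := by
        gcongr
        · rw [← norm_star L]; exact norm_mul_le _ _
        · exact hPX.norm_ringInverse_one_add_mul_mul_le hN
        · exact norm_mul_le _ _
    _ = ‖L‖ ^ 2 * ‖N‖ * ‖X‖ ^ 2 := by ring

theorem norm_riccatiMap_sub_riccatiMap_sub_quadRem_le {A A' N N' Q P X L : H →L[ℝ] H} {ε : ℝ}
    (hPX : (P + X).IsPositive) (hN : N.IsPositive) (hN' : N'.IsPositive)
    (hu : IsUnit (1 + N ∘L (P + X))) (hu' : IsUnit (1 + N' ∘L (P + X))) (hA : ‖A - A'‖ ≤ ε) :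
    ‖riccatiMap A N Q (P + X) - riccatiMap A' N' Q (P + X) - quadRem L N P X‖ ≤
      ‖L‖ ^ 2 * ‖N‖ * ‖X‖ ^ 2 +
        (‖A‖ ^ 2 * ‖P + X‖ ^ 2 * ‖N - N'‖ + (2 * ‖A‖ + ε) * ε * ‖P + X‖) := by
  refine (norm_sub_le _ _).trans ((add_le_add ?_ (norm_quadRem_le hPX hN)).trans_eq (add_comm _ _))
  exact norm_riccatiMap_sub_riccatiMap_le hPX hN.inner_nonneg_left hN'.inner_nonneg_left hu hu' hA

end Riccati

theorem riccati_perturbation_bound_le {a b m p r ε : ℝ} (ha : 0 ≤ a) (hm : 0 ≤ m) (hp : 0 ≤ p)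
    (hr : 0 ≤ r) (hε : 0 ≤ ε) (hmp : m ≤ p + 1) (hεb : ε ≤ b) :
    a ^ 2 * m ^ 2 * ((2 * b + ε) * ε * r) + (2 * a + ε) * ε * m ≤
      3 * ε * (p + 1) ^ 2 * (a + 1) ^ 2 * (r + 1) * (b + 1) := by
  set q := (p + 1) * (a + 1)
  have hq : 1 ≤ q := by nlinarith
  have ham : a * m ≤ q := by nlinarith
  have hm' : m ≤ q := by nlinarith
  have hb : 0 ≤ b := hε.trans hεb
  have h1 : a ^ 2 * m ^ 2 * ((2 * b + ε) * ε * r) ≤ q ^ 2 * (3 * ε * r * b) := by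
    have hsq : (a * m) ^ 2 ≤ q ^ 2 := by gcongr
    have hfac : (2 * b + ε) * ε * r ≤ 3 * ε * r * b := by nlinarith [mul_nonneg hε hr]
    calc _ = (a * m) ^ 2 * ((2 * b + ε) * ε * r) := by ring
      _ ≤ q ^ 2 * (3 * ε * r * b) := mul_le_mul hsq hfac (by positivity) (sq_nonneg q)
  have h2 : (2 * a + ε) * ε * m ≤ q ^ 2 * (ε * (2 + b)) := by
    calc _ = ε * (2 * (a * m) + ε * m) := by ring
      _ ≤ ε * (2 * q + b * q) := by gcongr
      _ ≤ ε * (2 * q ^ 2 + b * q ^ 2) := by gcongr <;> nlinarith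
      _ = _ := by ring
  calc _ ≤ q ^ 2 * (3 * ε * r * b) + q ^ 2 * (ε * (2 + b)) := add_le_add h1 h2
    _ ≤ 3 * ε * q ^ 2 * (r + 1) * (b + 1) := by
        have : 0 ≤ ε * q ^ 2 * (r + 2 * b + 1) := by positivity
        nlinarith
    _ = _ := by ring

theorem stmt_10_general
    {H₁ : Type*} [NormedAddCommGroup H₁] [InnerProductSpace ℝ H₁] [CompleteSpace H₁]
    {n : ℕ}
    (A A' : H₁ →L[ℝ] H₁)
    (B B' : EuclideanSpace ℝ (Fin n) →L[ℝ] H₁)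
    (R : EuclideanSpace ℝ (Fin n) →L[ℝ] EuclideanSpace ℝ (Fin n))
    (hR_sa : IsSelfAdjoint R) (hR_pos : ∀ u, u ≠ 0 → 0 < ⟪R u, u⟫)
    (Q : H₁ →L[ℝ] H₁)
    (N N' : H₁ →L[ℝ] H₁)
    (hN : N = B ∘L Ring.inverse R ∘L adjoint B)
    (hN' : N' = B' ∘L Ring.inverse R ∘L adjoint B')
    (P : H₁ →L[ℝ] H₁) (hP_sa : IsSelfAdjoint P)
    (L : H₁ →L[ℝ] H₁)
    (ρ : ℝ) (hρ0 : 0 < ρ) (hρ1 : ρ < 1)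
    (hbdd : BddAbove (Set.range fun k : ℕ => ‖L ^ k‖ / ρ ^ k))
    (τ : ℝ) (hτ : τ = ⨆ k : ℕ, ‖L ^ k‖ / ρ ^ k)
    (T : (H₁ →L[ℝ] H₁) →L[ℝ] (H₁ →L[ℝ] H₁))
    (hT : ∀ Y, T Y = Y - adjoint L ∘L Y ∘L L)
    (X : H₁ →L[ℝ] H₁) (hX_sa : IsSelfAdjoint X)
    (ν : ℝ) (hXν : ‖X‖ ≤ ν) (hν : ν ≤ 1 / 2)
    (hPX_pos : ∀ x, 0 ≤ ⟪(P + X) x, x⟫)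
    (hu1 : IsUnit ((1 : H₁ →L[ℝ] H₁) + N ∘L (P + X)))
    (hu2 : IsUnit ((1 : H₁ →L[ℝ] H₁) + N' ∘L (P + X)))
    (ε : ℝ) (hA : ‖A - A'‖ ≤ ε) (hB : ‖B - B'‖ ≤ ε) (hεB : ε ≤ ‖B‖) :
    ‖PhiMap T A A' N N' Q P L X‖ ≤
      (τ ^ 2 / (1 - ρ ^ 2)) *
        (‖L‖ ^ 2 * ‖N‖ * ν ^ 2 +
          3 * ε * (‖P‖ + 1) ^ 2 * (‖A‖ + 1) ^ 2 * (‖Ring.inverse R‖ + 1) * (‖B‖ + 1)) := by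
  have hε : 0 ≤ ε := (norm_nonneg _).trans hA
  have hρ : ρ ^ 2 < 1 := by nlinarith
  have hR : R.IsPositive := (isPositive_iff' R).2 ⟨hR_sa, fun u => by
    rcases eq_or_ne u 0 with rfl | hu
    · simp
    · exact (hR_pos u hu).le⟩
  have hNpos : N.IsPositive := hN ▸ hR.ringInverse.conj_adjoint B
  have hN'pos : N'.IsPositive := hN' ▸ hR.ringInverse.conj_adjoint B'
  have hPX : (P + X).IsPositive := (isPositive_iff' _).2 ⟨hP_sa.add hX_sa, hPX_pos⟩
  have hPXn : ‖P + X‖ ≤ ‖P‖ + 1 := (norm_add_le P X).trans (by linarith)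
  set D := riccatiMap A N Q (P + X) - riccatiMap A' N' Q (P + X) - quadRem L N P X
  have hD : ‖D‖ ≤ ‖L‖ ^ 2 * ‖N‖ * ν ^ 2 +
      3 * ε * (‖P‖ + 1) ^ 2 * (‖A‖ + 1) ^ 2 * (‖Ring.inverse R‖ + 1) * (‖B‖ + 1) := by
    have hNN' := hN ▸ hN' ▸ norm_comp_comp_adjoint_sub_le hB (Ring.inverse R)
    refine (norm_riccatiMap_sub_riccatiMap_sub_quadRem_le hPX hNpos hN'pos hu1 hu2 hA).trans
      (add_le_add (by gcongr) (le_trans ?_ (riccati_perturbation_bound_le (norm_nonneg _)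
        (norm_nonneg _) (norm_nonneg _) (norm_nonneg _) hε hPXn hεB)))
    gcongr
  have hLk : ∀ k : ℕ, ‖L ^ k‖ ≤ τ * ρ ^ k := fun k => by
    have := hτ ▸ le_ciSup hbdd k
    rwa [div_le_iff₀ (by positivity)] at this
  exact (norm_ringInverse_apply_le_of_stein hT hLk hρ D).trans (by gcongr)

/-- Bound on `‖Φ X‖` for admissible perturbations `X` with `‖X‖ ≤ ν ≤ 1/2`. -/
theorem stmt_10
    {H₁ : Type*} [NormedAddCommGroup H₁] [InnerProductSpace ℝ H₁] [CompleteSpace H₁]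
    {n : ℕ}
    (A A' : H₁ →L[ℝ] H₁)
    (B B' : EuclideanSpace ℝ (Fin n) →L[ℝ] H₁)
    (R : EuclideanSpace ℝ (Fin n) →L[ℝ] EuclideanSpace ℝ (Fin n))
    (hR_sa : IsSelfAdjoint R) (hR_pos : ∀ u, u ≠ 0 → 0 < ⟪R u, u⟫)
    (Q : H₁ →L[ℝ] H₁) (hQ_sa : IsSelfAdjoint Q) (hQ_pos : ∀ x, 0 ≤ ⟪Q x, x⟫)
    (N N' : H₁ →L[ℝ] H₁)
    (hN : N = B ∘L Ring.inverse R ∘L adjoint B)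
    (hN' : N' = B' ∘L Ring.inverse R ∘L adjoint B')
    (P : H₁ →L[ℝ] H₁) (hP_sa : IsSelfAdjoint P) (hP_pos : ∀ x, 0 ≤ ⟪P x, x⟫)
    (hP_unit : IsUnit ((1 : H₁ →L[ℝ] H₁) + N ∘L P))
    (hP_ric : P = adjoint A ∘L P ∘L Ring.inverse ((1 : H₁ →L[ℝ] H₁) + N ∘L P) ∘L A + Q)
    (K : H₁ →L[ℝ] EuclideanSpace ℝ (Fin n))
    (hK : K = -(Ring.inverse (R + adjoint B ∘L P ∘L B) ∘L adjoint B ∘L P ∘L A))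
    (L : H₁ →L[ℝ] H₁) (hL : L = A + B ∘L K)
    (ρ : ℝ) (hρ0 : 0 < ρ) (hρ1 : ρ < 1)
    (hspec : spectralRadius ℝ L ≤ ENNReal.ofReal ρ)
    (hbdd : BddAbove (Set.range fun k : ℕ => ‖L ^ k‖ / ρ ^ k))
    (τ : ℝ) (hτ : τ = ⨆ k : ℕ, ‖L ^ k‖ / ρ ^ k)
    (T : (H₁ →L[ℝ] H₁) →L[ℝ] (H₁ →L[ℝ] H₁))
    (hT : ∀ Y, T Y = Y - adjoint L ∘L Y ∘L L) (hT_unit : IsUnit T)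
    (X : H₁ →L[ℝ] H₁) (hX_sa : IsSelfAdjoint X)
    (ν : ℝ) (hXν : ‖X‖ ≤ ν) (hν : ν ≤ 1 / 2)
    (hPX_pos : ∀ x, 0 ≤ ⟪(P + X) x, x⟫)
    (hu1 : IsUnit ((1 : H₁ →L[ℝ] H₁) + N ∘L (P + X)))
    (hu2 : IsUnit ((1 : H₁ →L[ℝ] H₁) + N' ∘L (P + X)))
    (ε : ℝ) (hA : ‖A - A'‖ ≤ ε) (hB : ‖B - B'‖ ≤ ε) (hεB : ε ≤ ‖B‖) :
    ‖PhiMap T A A' N N' Q P L X‖ ≤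
      (τ ^ 2 / (1 - ρ ^ 2)) *
        (‖L‖ ^ 2 * ‖N‖ * ν ^ 2 +
          3 * ε * (‖P‖ + 1) ^ 2 * (‖A‖ + 1) ^ 2 * (‖Ring.inverse R‖ + 1) * (‖B‖ + 1)) :=
  stmt_10_general A A' B B' R hR_sa hR_pos Q N N' hN hN' P hP_sa L ρ hρ0 hρ1 hbdd τ hτ T hT X hX_sa
    ν hXν hν hPX_pos hu1 hu2 ε hA hB hεB
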